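/- The flow function of explicit liveness analysis over access graphs is not distributive: there exist access graphs G₁, G₂ and a flow function f arising from a reference assignment such that f(G₁ ⊎ G₂) is a strict lower bound (under ⊑G) of f(G₁) ⊎ f(G₂), i.e., f(G₁ ⊎ G₂) ⊑G f(G₁) ⊎ f(G₂) and f(G₁ ⊎ G₂) ≠ f(G₁) ⊎ f(G₂). -/
import Mathlib


open Classical

/-- An access graph over a fixed root variable: entry node, node set, edge set.
Nodes are labels (ℕ); their field-name components are given by a labelling
function `fl : ℕ → Option ℕ` (`none` = the summary node, matching every field). -/
structure Gph where
  entry : ℕ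
  nodes : Set ℕ
  edges : Set (ℕ × ℕ)

namespace Gph

/-- G ⊑G G': reverse containment of node and edge sets (same root). -/
def le (G G' : Gph) : Prop :=
  G.entry = G'.entry ∧ G'.nodes ⊆ G.nodes ∧ G'.edges ⊆ G.edges

/-- Union ⊎: componentwise union, identifying equal labels. -/
def union (G G' : Gph) : Gph :=
  ⟨G.entry, G.nodes ∪ G'.nodes, G.edges ∪ G'.edges⟩

end Gph

def FMatch (o : Option ℕ) (f : ℕ) : Prop := o = none ∨ o = some f

def FieldEq (a b : Option ℕ) : Prop := a = none ∨ b = none ∨ a = b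

/-- Paths from the entry node, as field sequences. -/
inductive Reaches (fl : ℕ → Option ℕ) (G : Gph) : ℕ → List ℕ → Prop
  | entry : Reaches fl G G.entry []
  | step {n m : ℕ} {σ : List ℕ} {f : ℕ} :
      Reaches fl G n σ → (n, m) ∈ G.edges → FMatch (fl m) f →
      Reaches fl G m (σ ++ [f])

/-- The linear access graph with entry label r and the given chain of node labels. -/
def linear (r : ℕ) (ls : List ℕ) : Gph :=
  ⟨r, insert r {a | a ∈ ls}, {p | p ∈ (r :: ls).zip ls}⟩

/-- The last node of a linear graph. -/
def lNode (r : ℕ) (ls : List ℕ) : ℕ := (r :: ls).getLastD r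

/-- UniqueAccessPath?(G,n). -/
def UniqueAP (fl : ℕ → Option ℕ) (G : Gph) (n : ℕ) : Prop :=
  ∀ σ₁ σ₂, Reaches fl G n σ₁ → Reaches fl G n σ₂ → σ₁ = σ₂

/-- Path removal G ⊖ ρ_x, where xs is the field sequence of ρ_x: deletes edges
whose source represents Base(ρ_x) uniquely and whose target's field matches
Frontier(ρ_x), followed by CleanUp; the empty graph when ρ_x is simple. -/
def pathRemove (fl : ℕ → Option ℕ) (G : Gph) (xs : List ℕ) : Gph :=
  if xs = [] then ⟨G.entry, ∅, ∅⟩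
  else
    let Edel : Set (ℕ × ℕ) :=
      {p | p ∈ G.edges ∧ Reaches fl G p.1 xs.dropLast ∧
        FMatch (fl p.2) (xs.getLastD 0) ∧ UniqueAP fl G p.1}
    let G₂ : Gph := ⟨G.entry, G.nodes, G.edges \ Edel⟩
    ⟨G.entry, {n | ∃ σ, Reaches fl G₂ n σ}, G₂.edges⟩

/-- The node correspondence ACN(G,G'). -/
inductive ACN (fl : ℕ → Option ℕ) (G G' : Gph) : ℕ → ℕ → Prop
  | entry : ACN fl G G' G.entry G'.entry
  | step {n m n' m' : ℕ} :
      ACN fl G G' n n' → (n, m) ∈ G.edges → (n', m') ∈ G'.edges →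
      FieldEq (fl m) (fl m') → ACN fl G G' m m'

/-- Factorization G/(G_x, {lastN}): remainder graphs rooted at successors of nodes
of G corresponding to the last node of G_x. -/
def factor (fl : ℕ → Option ℕ) (G Gx : Gph) (lastN : ℕ) : Set Gph :=
  {R | ∃ ni nj : ℕ, (ni, nj) ∈ G.edges ∧ ACN fl G Gx ni lastN ∧
    R = ⟨nj, G.nodes, G.edges⟩}

/-- Extension (G,M) # S. -/
noncomputable def extendSet (G : Gph) (M : Set ℕ) (S : Set Gph) : Gph :=
  if S = ∅ then ⟨G.entry, ∅, ∅⟩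
  else
    ⟨G.entry,
     G.nodes ∪ ⋃ R ∈ S, R.nodes,
     G.edges ∪ ⋃ R ∈ S, (R.edges ∪ {p : ℕ × ℕ | p.1 ∈ M ∧ p.2 = R.entry})⟩

/-- The explicit-liveness flow function of a reference assignment α_x = α_y over
access graphs rooted at x (as for x = x.n in the paper's counterexample):
f(G) = (G ⊖ ρ_x) ⊎ G(Base ρ_x) ⊎ G(Base ρ_y) ⊎ ((G_y, M_y) # (G/(G_x, M_x))),
where xs is the field sequence of ρ_x and xl, yl are the node-label lists of the
linear graphs G_x, G_y. -/
noncomputable def assignFlow (fl : ℕ → Option ℕ) (r : ℕ) (xs : List ℕ)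
    (xl yl : List ℕ) (G : Gph) : Gph :=
  (pathRemove fl G xs).union
    (((linear r xl.dropLast).union (linear r yl.dropLast)).union
      (extendSet (linear r yl) {lNode r yl} (factor fl G (linear r xl) (lNode r xl))))

/- ### Auxiliary material for the counterexample -/

def myfl : ℕ → Option ℕ := fun n => if n = 0 then some 20 else if n = 1 then some 10 else some 30

def GA : Gph := ⟨0, {0, 1}, {(0, 1)}⟩
def GB : Gph := ⟨0, {0, 1}, {(1, 0)}⟩

lemma reaches_nil {fl : ℕ → Option ℕ} {G : Gph} {n : ℕ} (h : Reaches fl G n []) :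
    n = G.entry := by
  have : ∀ σ', Reaches fl G n σ' → σ' = ([] : List ℕ) → n = G.entry := by
    intro σ' h'
    induction h' with
    | entry => intro _; rfl
    | step h1 h2 h3 ih => intro he; simp at he
  exact this [] h rfl

lemma reaches_mono {fl : ℕ → Option ℕ} {G G' : Gph} {n : ℕ} {σ : List ℕ}
    (he : G.entry = G'.entry) (hs : G.edges ⊆ G'.edges)
    (h : Reaches fl G n σ) : Reaches fl G' n σ := by
  induction h with
  | entry => exact he ▸ Reaches.entry
  | step h1 h2 h3 ih => exact Reaches.step ih (hs h2) h3

/-- In GA (single edge 0→1) every path to 0 is empty. -/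
lemma GA_reach {n : ℕ} {σ : List ℕ} (h : Reaches myfl GA n σ) :
    (n = 0 ∧ σ = []) ∨ (n = 1 ∧ σ = [10]) := by
  induction h with
  | entry => exact Or.inl ⟨rfl, rfl⟩
  | @step n m σ f h1 h2 h3 ih =>
    have hm : n = 0 ∧ m = 1 := by
      have : (n, m) = (0, 1) := h2
      simp_all [Prod.ext_iff]
    rcases ih with ⟨hn, hσ⟩ | ⟨hn, hσ⟩
    · subst hσ
      have hf : f = 10 := by
        rcases h3 with h | h <;> simp_all [myfl, hm.2]
      simp [hm.2, hf]
    · exact absurd (hn ▸ h2) (by simp [GA])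

lemma uniqueAP_GA : UniqueAP myfl GA 0 := by
  intro σ₁ σ₂ h₁ h₂
  rcases GA_reach h₁ with ⟨_, e₁⟩ | ⟨h, _⟩
  · rcases GA_reach h₂ with ⟨_, e₂⟩ | ⟨h', _⟩
    · rw [e₁, e₂]
    · exact absurd h' (by norm_num)
  · exact absurd h (by norm_num)

/-- ACN into `linear 0 [2]` never reaches node 2, given all edge targets of G are 0 or 1. -/
lemma ACN_ne_two {G : Gph} (hT : ∀ p ∈ G.edges, p.2 = 0 ∨ p.2 = 1)
    {n m : ℕ} (h : ACN myfl G (linear 0 [2]) n m) : m = 0 := by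
  induction h with
  | entry => rfl
  | @step n m n' m' h1 h2 h3 h4 ih =>
    exfalso
    have hm' : m' = 2 := by
      have : (n', m') = (0, 2) := by
        simpa [linear, List.zip] using h3
      simp_all [Prod.ext_iff]
    rcases hT _ h2 with hm | hm <;>
      rcases h4 with h | h | h <;> simp_all [myfl]

lemma factor_empty {G : Gph} (hT : ∀ p ∈ G.edges, p.2 = 0 ∨ p.2 = 1) :
    factor myfl G (linear 0 [2]) (lNode 0 [2]) = ∅ := by
  have hl : lNode 0 [2] = 2 := rfl
  ext R
  simp only [factor, hl, Set.mem_setOf_eq, Set.mem_empty_iff_false, iff_false]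
  rintro ⟨ni, nj, _, hacn, _⟩
  exact absurd (ACN_ne_two hT hacn) (by norm_num)

/-- The flow function on our parameters: membership in edges. -/
lemma flow_edges {G : Gph} (hT : ∀ p ∈ G.edges, p.2 = 0 ∨ p.2 = 1) (p : ℕ × ℕ) :
    p ∈ (assignFlow myfl 0 [10] [2] [] G).edges ↔ p ∈ (pathRemove myfl G [10]).edges := by
  simp only [assignFlow, factor_empty hT]
  simp [Gph.union, extendSet, linear, List.zip]

lemma flow_nodes {G : Gph} (hT : ∀ p ∈ G.edges, p.2 = 0 ∨ p.2 = 1) (n : ℕ) :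
    n ∈ (assignFlow myfl 0 [10] [2] [] G).nodes ↔
      n ∈ (pathRemove myfl G [10]).nodes ∨ n = 0 := by
  simp only [assignFlow, factor_empty hT]
  simp [Gph.union, extendSet, linear]
  tauto

lemma flow_entry {G : Gph} : (assignFlow myfl 0 [10] [2] [] G).entry = G.entry := rfl

/-- The deleted-edge set of `pathRemove _ _ [10]`. -/
def Edel (G : Gph) : Set (ℕ × ℕ) :=
  {p | p ∈ G.edges ∧ Reaches myfl G p.1 [] ∧ FMatch (myfl p.2) 10 ∧ UniqueAP myfl G p.1}

/-- Unfolding `pathRemove` for xs = [10]. -/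
lemma pathRemove_unfold (G : Gph) :
    pathRemove myfl G [10] =
      ⟨G.entry,
       {n | ∃ σ, Reaches myfl ⟨G.entry, G.nodes, G.edges \ Edel G⟩ n σ},
       G.edges \ Edel G⟩ := by
  simp [pathRemove, Edel]

lemma hTA : ∀ p ∈ GA.edges, p.2 = 0 ∨ p.2 = 1 := by
  intro p hp
  have h : p = (0, 1) := hp
  simp [h]

lemma hTB : ∀ p ∈ GB.edges, p.2 = 0 ∨ p.2 = 1 := by
  intro p hp
  have h : p = (1, 0) := hp
  simp [h]

lemma hTU : ∀ p ∈ (GA.union GB).edges, p.2 = 0 ∨ p.2 = 1 := by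
  intro p hp
  rcases hp with h | h
  · have h' : p = (0, 1) := h
    simp [h']
  · have h' : p = (1, 0) := h
    simp [h']

lemma EdelA_mem : (0, 1) ∈ Edel GA := by
  refine ⟨rfl, Reaches.entry, Or.inr (by simp [myfl]), uniqueAP_GA⟩

/-- In the union, the cycle 0 → 1 → 0 destroys `UniqueAP` at the entry,
so nothing is deleted. -/
lemma EdelU_empty : ∀ p, p ∉ Edel (GA.union GB) := by
  rintro p ⟨hp, hre, _, huap⟩
  rcases hp with h | h
  · -- p = (0,1): UniqueAP fails at 0
    have h' : p = (0, 1) := h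
    subst h'
    have e01 : ((0 : ℕ), (1 : ℕ)) ∈ (GA.union GB).edges := Or.inl rfl
    have e10 : ((1 : ℕ), (0 : ℕ)) ∈ (GA.union GB).edges := Or.inr rfl
    have h1 : Reaches myfl (GA.union GB) 1 ([] ++ [10]) :=
      Reaches.step Reaches.entry e01 (Or.inr (by simp [myfl]))
    have h2 : Reaches myfl (GA.union GB) 0 (([] ++ [10]) ++ [20]) :=
      Reaches.step h1 e10 (Or.inr (by simp [myfl]))
    have := huap [] (([] ++ [10]) ++ [20]) Reaches.entry h2
    simp at this
  · -- p = (1,0): 1 is not reachable by the empty path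
    have h' : p = (1, 0) := h
    subst h'
    have := reaches_nil hre
    simp [Gph.union, GA] at this

/-- The flow function of explicit liveness analysis is not distributive: there are
access graphs G₁, G₂ and a flow function f arising from a reference assignment
with f(G₁ ⊎ G₂) a strict lower bound (under ⊑G) of f(G₁) ⊎ f(G₂). -/
theorem liveness_flow_not_distributive :
    ∃ (fl : ℕ → Option ℕ) (r : ℕ) (xs xl yl : List ℕ) (G₁ G₂ : Gph),
      Gph.le (assignFlow fl r xs xl yl (G₁.union G₂))
        ((assignFlow fl r xs xl yl G₁).union (assignFlow fl r xs xl yl G₂)) ∧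
      assignFlow fl r xs xl yl (G₁.union G₂) ≠
        (assignFlow fl r xs xl yl G₁).union (assignFlow fl r xs xl yl G₂) := by
  refine ⟨myfl, 0, [10], [2], [], GA, GB, ⟨rfl, ?_, ?_⟩, ?_⟩
  · -- nodes of f(GA) ⊎ f(GB) ⊆ nodes of f(GA ⊎ GB)
    intro n hn
    rw [flow_nodes hTU, pathRemove_unfold]
    rcases hn with hn | hn
    · rw [flow_nodes hTA, pathRemove_unfold] at hn
      rcases hn with ⟨σ, hσ⟩ | h
      · refine Or.inl ⟨σ, reaches_mono ?_ ?_ hσ⟩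
        · rfl
        · intro p hp
          exact ⟨Or.inl hp.1, EdelU_empty p⟩
      · exact Or.inr h
    · rw [flow_nodes hTB, pathRemove_unfold] at hn
      rcases hn with ⟨σ, hσ⟩ | h
      · refine Or.inl ⟨σ, reaches_mono ?_ ?_ hσ⟩
        · rfl
        · intro p hp
          exact ⟨Or.inr hp.1, EdelU_empty p⟩
      · exact Or.inr h
  · -- edges of f(GA) ⊎ f(GB) ⊆ edges of f(GA ⊎ GB)
    intro p hp
    rw [flow_edges hTU, pathRemove_unfold]
    rcases hp with hp | hp
    · rw [flow_edges hTA, pathRemove_unfold] at hp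
      exact ⟨Or.inl hp.1, EdelU_empty p⟩
    · rw [flow_edges hTB, pathRemove_unfold] at hp
      exact ⟨Or.inr hp.1, EdelU_empty p⟩
  · -- strictness: the edge (0,1) of the spurious path is kept only in f(GA ⊎ GB)
    intro heq
    have hL : ((0 : ℕ), (1 : ℕ)) ∈ (assignFlow myfl 0 [10] [2] [] (GA.union GB)).edges := by
      rw [flow_edges hTU, pathRemove_unfold]
      exact ⟨Or.inl rfl, EdelU_empty _⟩
    rw [heq] at hL
    rcases hL with h | h
    · rw [flow_edges hTA, pathRemove_unfold] at h
      exact h.2 EdelA_mem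
    · rw [flow_edges hTB, pathRemove_unfold] at h
      have : ((0 : ℕ), (1 : ℕ)) = (1, 0) := h.1
      simp at this
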